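/- arXiv:1103.2935 — 4 statements merged into one kernel-verified Lean document; each statement's English description precedes it below -/
import Mathlib

section
/- Let m, n be positive integers with 2n ≤ m, let U ⊆ ℝ^m be a nonempty open set, let V_1, …, V_n be smooth vector fields on U whose values V_1(z), …, V_n(z) are linearly independent at every z ∈ U, and suppose the span is involutive: [V_i, V_j](z) ∈ span{V_1(z), …, V_n(z)} for all z ∈ U and all i, j. Let F be a smooth vector field on U. Assume that for every nonempty open subset U' ⊆ U and every smooth map ξ : U' → ℝ^n, if [F, ξ^i V_i](z) ∈ span{V_1(z), …, V_n(z)} for all z ∈ U', then ξ is identically zero. Then the set of points z ∈ U at which the 2n vectors V_1(z), …, V_n(z), [F, V_1](z), …, [F, V_n](z) are linearly independent is an open and dense subset of U. -/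
/-!
Suppose the `2n` fields `V₁, …, Vₙ, [F, V₁], …, [F, Vₙ]` were dependent at every point of a
nonempty open `O ⊆ U`. At a point `z₁` where their rank is maximal on `O`, extend `V(z₁)` to a
basis of their span; some `[F, Vⱼ]` is left out of it. The chosen subfamily stays independent
near `z₁`, hence by maximality of the rank it still spans there, and `[F, Vⱼ]` is a combination
of it whose coefficients are smooth (compose with a left inverse at `z₁` and invert the
resulting square system). Moving the `[F, Vᵢ]` terms to one side gives a smooth `ξ` with
`ξʲ = 1` and `∑ ξⁱ [F, Vᵢ] ∈ 𝒱`; by the Leibniz rule `[F, ξⁱ Vᵢ] ≡ ξⁱ [F, Vᵢ]` modulo `𝒱`,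
contradicting the regularity of `F`.
-/

/-- The Lie bracket of two vector fields (as maps `E → E`), defined via the
Fréchet derivative: `[X,Y](z) = DY(z)(X(z)) − DX(z)(Y(z))`. -/
noncomputable def lieB {E : Type*} [NormedAddCommGroup E] [NormedSpace ℝ E]
    (X Y : E → E) : E → E :=
  fun z => fderiv ℝ Y z (X z) - fderiv ℝ X z (Y z)

open Set Submodule Module
open scoped ContDiff

section

variable {E : Type*} [NormedAddCommGroup E] [NormedSpace ℝ E]

theorem contDiffOn_lieB {U : Set E} (hU : IsOpen U) {X Y : E → E}
    (hX : ContDiffOn ℝ ∞ X U) (hY : ContDiffOn ℝ ∞ Y U) : ContDiffOn ℝ ∞ (lieB X Y) U :=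
  ((hY.fderiv_of_isOpen hU le_rfl).clm_apply hX).sub
    ((hX.fderiv_of_isOpen hU le_rfl).clm_apply hY)

theorem lieB_sum_smul {ι : Type*} [Fintype ι] {F : E → E} {V : ι → E → E} {ξ : E → ι → ℝ}
    {z : E} (hV : ∀ i, DifferentiableAt ℝ (V i) z)
    (hξ : ∀ i, DifferentiableAt ℝ (ξ · i) z) :
    lieB F (fun w => ∑ i, ξ w i • V i w) z =
      ∑ i, ξ z i • lieB F (V i) z + ∑ i, fderiv ℝ (ξ · i) z (F z) • V i z := by
  have hsum : fderiv ℝ (fun w => ∑ i, ξ w i • V i w) z (F z) =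
      ∑ i, (ξ z i • fderiv ℝ (V i) z (F z) + fderiv ℝ (ξ · i) z (F z) • V i z) := by
    rw [fderiv_fun_sum (A := fun i w => ξ w i • V i w) fun i _ => (hξ i).smul (hV i),
      sum_apply]
    simp only [fderiv_fun_smul (hξ _) (hV _), add_apply, smul_apply,
      ContinuousLinearMap.smulRight_apply]
  simp only [lieB, hsum, map_sum, map_smul, smul_sub, Finset.sum_sub_distrib,
    Finset.sum_add_distrib]
  abel

theorem lieB_sum_smul_mem_span {ι : Type*} [Fintype ι] {F : E → E} {V : ι → E → E}
    {ξ : E → ι → ℝ} {z : E} (hV : ∀ i, DifferentiableAt ℝ (V i) z)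
    (hξ : ∀ i, DifferentiableAt ℝ (ξ · i) z)
    (h : ∑ i, ξ z i • lieB F (V i) z ∈ span ℝ (range (V · z))) :
    lieB F (fun w => ∑ i, ξ w i • V i w) z ∈ span ℝ (range (V · z)) := by
  rw [lieB_sum_smul hV hξ]
  exact add_mem h <| sum_mem fun i _ => smul_mem _ _ <| subset_span <| mem_range_self i

end

theorem exists_contDiffOn_coeffs_of_mem_span {X E ι : Type*}
    [NormedAddCommGroup X] [NormedSpace ℝ X] [NormedAddCommGroup E] [NormedSpace ℝ E]
    [FiniteDimensional ℝ E] [Fintype ι] {k : WithTop ℕ∞}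
    {s : Set X} (hs : IsOpen s) {w : ι → X → E} (hw : ∀ p, ContDiffOn ℝ k (w p) s)
    {v : X → E} (hv : ContDiffOn ℝ k v s) (hspan : ∀ z ∈ s, v z ∈ span ℝ (range (w · z)))
    {z₁ : X} (hz₁ : z₁ ∈ s) (hli : LinearIndependent ℝ (w · z₁)) :
    ∃ t, IsOpen t ∧ z₁ ∈ t ∧ t ⊆ s ∧ ∃ μ : X → ι → ℝ, ContDiffOn ℝ k μ t ∧
      ∀ z ∈ t, v z = ∑ p, μ z p • w p z := by
  classical
  set T : X → (ι → ℝ) →L[ℝ] E := fun z => ∑ p, (ContinuousLinearMap.proj p).smulRight (w p z)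
  have hT : ∀ z c, T z c = ∑ p, c p • w p z := fun z c => by simp [T]
  have hTs : ContDiffOn ℝ k T s := ContDiffOn.sum fun p _ => contDiffOn_const.smulRight (hw p)
  obtain ⟨π, hπ⟩ := (T z₁ : (ι → ℝ) →ₗ[ℝ] E).exists_leftInverse_of_injective <| by
    rw [LinearMap.ker_eq_bot']
    intro c hc
    exact funext <| Fintype.linearIndependent_iff.1 hli c (by rwa [← hT])
  set P : E →L[ℝ] (ι → ℝ) := LinearMap.toContinuousLinearMap π
  set N : X → (ι → ℝ) →L[ℝ] (ι → ℝ) := fun z => P.comp (T z)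
  have hN : ContDiffOn ℝ k N s := contDiffOn_const.clm_comp hTs
  have hN₁ : N z₁ = 1 := ContinuousLinearMap.coe_injective hπ
  refine ⟨s ∩ N ⁻¹' {x | IsUnit x}, hN.continuousOn.isOpen_inter_preimage hs Units.isOpen,
    ⟨hz₁, by simp [hN₁]⟩, inter_subset_left, fun z => Ring.inverse (N z) (P (v z)), ?_, ?_⟩
  · rintro z ⟨hz, u, hu⟩
    have hinv : ContDiffAt ℝ k (fun z => Ring.inverse (N z)) z :=
      (hu ▸ contDiffAt_ringInverse ℝ u).comp z (hN.contDiffAt (hs.mem_nhds hz))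
    exact (hinv.clm_apply (P.contDiff.contDiffAt.comp z (hv.contDiffAt (hs.mem_nhds hz))))
      |>.contDiffWithinAt
  · rintro z ⟨hz, hu⟩
    obtain ⟨c, hc⟩ := (mem_span_range_iff_exists_fun ℝ).1 (hspan z hz)
    have hPv : P (v z) = N z c := by simp only [N, ← hc, ← hT]; rfl
    simp only [hPv, ← mul_apply_eq_comp, Ring.inverse_mul_cancel _ hu, one_apply_eq_self, hc]

theorem exists_contDiffOn_coeffs_of_mem_span_image {X E κ : Type*}
    [NormedAddCommGroup X] [NormedSpace ℝ X] [NormedAddCommGroup E] [NormedSpace ℝ E]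
    [FiniteDimensional ℝ E] [Fintype κ] {k : WithTop ℕ∞}
    {s : Set X} (hs : IsOpen s) {w : κ → X → E} (hw : ∀ p, ContDiffOn ℝ k (w p) s)
    {v : X → E} (hv : ContDiffOn ℝ k v s) {K : Set κ}
    (hspan : ∀ z ∈ s, v z ∈ span ℝ ((w · z) '' K))
    {z₁ : X} (hz₁ : z₁ ∈ s) (hli : LinearIndepOn ℝ (w · z₁) K) :
    ∃ t, IsOpen t ∧ z₁ ∈ t ∧ t ⊆ s ∧ ∃ c : X → κ → ℝ, ContDiffOn ℝ k c t ∧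
      (∀ z, ∀ p ∉ K, c z p = 0) ∧ ∀ z ∈ t, v z = ∑ p, c z p • w p z := by
  classical
  obtain ⟨t, ht, hz₁t, hts, μ, hμ, hμrel⟩ := exists_contDiffOn_coeffs_of_mem_span hs
    (w := fun (p : K) => w p) (fun p => hw p) hv
    (fun z hz => image_eq_range (w · z) K ▸ hspan z hz) hz₁ hli
  refine ⟨t, ht, hz₁t, hts, fun z p => if h : p ∈ K then μ z ⟨p, h⟩ else 0,
    contDiffOn_pi.2 fun p => ?_, fun z p hp => dif_neg hp, fun z hz => ?_⟩
  · by_cases h : p ∈ K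
    · simpa only [h, dif_pos] using contDiffOn_pi.1 hμ ⟨p, h⟩
    · simpa only [h, dif_neg, not_false_eq_true] using contDiffOn_const
  · have hout : ∑ p : {p // p ∉ K}, (if h : (p : κ) ∈ K then μ z ⟨p, h⟩ else 0) • w p z = 0 :=
      Finset.sum_eq_zero fun p _ => by simp [p.2]
    rw [← Fintype.sum_subtype_add_sum_subtype (· ∈ K), hout, add_zero]
    exact (hμrel z hz).trans (Finset.sum_congr rfl fun p _ => by simp)

theorem exists_forall_le_of_bddAbove {X : Type*} {O : Set X} (hO : O.Nonempty) {g : X → ℕ}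
    (hg : BddAbove (g '' O)) : ∃ z₁ ∈ O, ∀ z ∈ O, g z ≤ g z₁ := by
  obtain ⟨_, ⟨z₁, hz₁, rfl⟩, hmax⟩ := hg.exists_isGreatest_of_nonempty (hO.image g)
  exact ⟨z₁, hz₁, fun z hz => hmax ⟨z, hz, rfl⟩⟩

theorem finrank_span_image_eq_ncard {κ 𝕜 M : Type*} [DivisionRing 𝕜] [AddCommGroup M]
    [Module 𝕜 M] {f : κ → M} {s : Set κ} (hs : s.Finite) (hf : LinearIndepOn 𝕜 f s) :
    finrank 𝕜 (span 𝕜 (f '' s)) = s.ncard := by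
  have := hs.fintype
  rw [image_eq_range, finrank_span_eq_card hf, ← Nat.card_coe_set_eq, Nat.card_eq_fintype_card]

theorem exists_isOpen_forall_mem_span_image {X κ E : Type*} [TopologicalSpace X] [Finite κ]
    [NormedAddCommGroup E] [NormedSpace ℝ E] [FiniteDimensional ℝ E]
    {O : Set X} (hO : IsOpen O) {f : X → κ → E} (hf : ∀ k, ContinuousOn (f · k) O)
    {z₁ : X} (hz₁ : z₁ ∈ O)
    (hmax : ∀ z ∈ O, finrank ℝ (span ℝ (range (f z))) ≤ finrank ℝ (span ℝ (range (f z₁))))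
    {K : Set κ} (hK : LinearIndepOn ℝ (f z₁) K) (hKspan : range (f z₁) ⊆ span ℝ (f z₁ '' K)) :
    ∃ W, IsOpen W ∧ z₁ ∈ W ∧ W ⊆ O ∧ ∀ z ∈ W, ∀ k, f z k ∈ span ℝ (f z '' K) := by
  refine ⟨O ∩ (fun z (p : K) => f z p) ⁻¹' {g | LinearIndependent ℝ g},
    (continuousOn_pi.2 fun p : K => hf p).isOpen_inter_preimage hO
      isOpen_setOfPred_linearIndependent,
    ⟨hz₁, hK⟩, inter_subset_left, ?_⟩
  rintro z ⟨hzO, hzK⟩ k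
  have hKspan' : span ℝ (f z₁ '' K) = span ℝ (range (f z₁)) :=
    le_antisymm (span_mono (image_subset_range _ _)) (span_le.2 hKspan)
  have hspan : span ℝ (f z '' K) = span ℝ (range (f z)) := by
    refine eq_of_le_of_finrank_le (span_mono (image_subset_range _ _)) ?_
    calc finrank ℝ (span ℝ (range (f z))) ≤ finrank ℝ (span ℝ (range (f z₁))) := hmax z hzO
      _ = finrank ℝ (span ℝ (f z '' K)) := by
        rw [← hKspan', finrank_span_image_eq_ncard K.toFinite hK,
          finrank_span_image_eq_ncard K.toFinite hzK]
  exact hspan ▸ subset_span (mem_range_self k)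

section

variable {E ι : Type*} [NormedAddCommGroup E] [NormedSpace ℝ E]

/-- `[F, 𝒱] ∩ 𝒱 = {0}` on every open subset of `U`, for `𝒱` spanned by the fields `V i`. -/
def LieBracketRegular [Fintype ι] (U : Set E) (V : ι → E → E) (F : E → E) : Prop :=
  ∀ U' : Set E, U' ⊆ U → IsOpen U' → U'.Nonempty →
    ∀ ξ : E → ι → ℝ, ContDiffOn ℝ ∞ ξ U' →
      (∀ z ∈ U', lieB F (fun w => ∑ i, ξ w i • V i w) z ∈ span ℝ (range fun k => V k z)) →
      ∀ z ∈ U', ξ z = 0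

theorem contDiffOn_sumElim_lieB {U : Set E} (hU : IsOpen U) {V : ι → E → E}
    (hV : ∀ i, ContDiffOn ℝ ∞ (V i) U) {F : E → E} (hF : ContDiffOn ℝ ∞ F U) (k : ι ⊕ ι) :
    ContDiffOn ℝ ∞ (fun z => Sum.elim (V · z) (fun i => lieB F (V i) z) k) U := by
  rcases k with i | i
  exacts [hV i, contDiffOn_lieB hU hF (hV i)]

theorem sum_smul_lieB_mem_span_of_lieB_eq_sum [Fintype ι] [DecidableEq ι] {F : E → E}
    {V : ι → E → E} {z : E} {j : ι} {c : ι ⊕ ι → ℝ}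
    (h : lieB F (V j) z = ∑ k, c k • Sum.elim (V · z) (fun i => lieB F (V i) z) k) :
    ∑ i, ((if i = j then 1 else 0) - c (.inr i)) • lieB F (V i) z ∈ span ℝ (range (V · z)) := by
  have hsum : ∑ i, ((if i = j then 1 else 0) - c (.inr i)) • lieB F (V i) z =
      ∑ i, c (.inl i) • V i z := by
    simp only [sub_smul, Finset.sum_sub_distrib, ite_smul, one_smul, zero_smul,
      Finset.sum_ite_eq', Finset.mem_univ, if_true, h, Fintype.sum_sum_type, Sum.elim_inl,
      Sum.elim_inr, add_sub_cancel_right]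
  rw [hsum]
  exact sum_mem fun i _ => smul_mem _ _ (subset_span (mem_range_self i))

theorem coeff_inr_eq_one_of_lieB_eq_sum [Fintype ι] {U : Set E} (hU : IsOpen U)
    {V : ι → E → E} (hV : ∀ i, ContDiffOn ℝ ∞ (V i) U) {F : E → E} (hreg : LieBracketRegular U V F)
    {t : Set E} (ht : IsOpen t) (htU : t ⊆ U) {j : ι} {c : E → ι ⊕ ι → ℝ}
    (hc : ContDiffOn ℝ ∞ c t)
    (hrel : ∀ z ∈ t, lieB F (V j) z = ∑ k, c z k • Sum.elim (V · z) (fun i => lieB F (V i) z) k)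
    {z : E} (hz : z ∈ t) : c z (.inr j) = 1 := by
  classical
  set ξ : E → ι → ℝ := fun z i => (if i = j then 1 else 0) - c z (.inr i)
  have hξ : ContDiffOn ℝ ∞ ξ t :=
    contDiffOn_pi.2 fun i => contDiffOn_const.sub (contDiffOn_pi.1 hc (.inr i))
  have hξz : ξ z = 0 := hreg t htU ht ⟨z, hz⟩ ξ hξ (fun w hw => lieB_sum_smul_mem_span
    (fun i => ((hV i).contDiffAt (hU.mem_nhds (htU hw))).differentiableAt (by simp))
    (fun i => ((contDiffOn_pi.1 hξ i).contDiffAt (ht.mem_nhds hw)).differentiableAt (by simp))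
    (sum_smul_lieB_mem_span_of_lieB_eq_sum (hrel w hw))) z hz
  have := congrFun hξz j
  simp only [ξ, ↓reduceIte, Pi.zero_apply] at this
  linarith

end

theorem exists_linearIndependent_sumElim_lieB {E ι : Type*} [NormedAddCommGroup E]
    [NormedSpace ℝ E] [FiniteDimensional ℝ E] [Fintype ι] {U : Set E} (hU : IsOpen U)
    {V : ι → E → E} (hV : ∀ i, ContDiffOn ℝ ∞ (V i) U)
    (hVli : ∀ z ∈ U, LinearIndependent ℝ (V · z)) {F : E → E} (hF : ContDiffOn ℝ ∞ F U)
    (hreg : LieBracketRegular U V F) {O : Set E} (hO : IsOpen O) (hOU : O ⊆ U)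
    (hOne : O.Nonempty) :
    ∃ z ∈ O, LinearIndependent ℝ (Sum.elim (V · z) fun i => lieB F (V i) z) := by
  classical
  by_contra! hdep
  set cols : E → ι ⊕ ι → E := fun z => Sum.elim (V · z) fun i => lieB F (V i) z
  have hcols : ∀ k, ContDiffOn ℝ ∞ (cols · k) O :=
    fun k => (contDiffOn_sumElim_lieB hU hV hF k).mono hOU
  obtain ⟨z₁, hz₁O, hz₁max⟩ := exists_forall_le_of_bddAbove hOne
    (g := fun z => finrank ℝ (span ℝ (range (cols z))))
    ⟨finrank ℝ E, by rintro _ ⟨z, -, rfl⟩; exact Submodule.finrank_le _⟩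
  obtain ⟨K, -, hinlK, hKspan, hKli⟩ := exists_linearIndepOn_extension (v := cols z₁)
    ((linearIndepOn_range_iff Sum.inl_injective _).2 (hVli z₁ (hOU hz₁O))) (subset_univ _)
  obtain ⟨j, hjK⟩ : ∃ j, .inr j ∉ K := by
    by_contra! hK
    have hKuniv : K = univ :=
      eq_univ_of_forall (by rintro (i | i); exacts [hinlK (mem_range_self i), hK i])
    exact hdep z₁ hz₁O (linearIndepOn_univ_iff.1 (hKuniv ▸ hKli))
  obtain ⟨W, hW, hz₁W, hWO, hWspan⟩ := exists_isOpen_forall_mem_span_image hO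
    (fun k => (hcols k).continuousOn) hz₁O hz₁max hKli (image_univ ▸ hKspan)
  obtain ⟨t, ht, hz₁t, htW, c, hc, hcK, hcrel⟩ := exists_contDiffOn_coeffs_of_mem_span_image hW
    (w := fun k z => cols z k) (fun k => (hcols k).mono hWO) ((hcols (.inr j)).mono hWO)
    (fun z hz => hWspan z hz _) hz₁W hKli
  have := coeff_inr_eq_one_of_lieB_eq_sum hU hV hreg ht (htW.trans (hWO.trans hOU)) hc hcrel
    hz₁t
  rw [hcK z₁ _ hjK] at this
  exact zero_ne_one this

theorem stmt0_general (m n : ℕ)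
    (U : Set (Fin m → ℝ)) (hU : IsOpen U)
    (V : Fin n → (Fin m → ℝ) → Fin m → ℝ)
    (hVsmooth : ∀ i, ContDiffOn ℝ (⊤ : ℕ∞) (V i) U)
    (hVli : ∀ z ∈ U, LinearIndependent ℝ (fun i => V i z))
    (F : (Fin m → ℝ) → Fin m → ℝ) (hF : ContDiffOn ℝ (⊤ : ℕ∞) F U)
    (hreg : ∀ U' : Set (Fin m → ℝ), U' ⊆ U → IsOpen U' → U'.Nonempty →
      ∀ ξ : (Fin m → ℝ) → Fin n → ℝ, ContDiffOn ℝ (⊤ : ℕ∞) ξ U' →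
        (∀ z ∈ U', lieB F (fun w => ∑ i, ξ w i • V i w) z ∈
          Submodule.span ℝ (Set.range fun k => V k z)) →
        ∀ z ∈ U', ξ z = 0) :
    IsOpen {z | z ∈ U ∧ LinearIndependent ℝ
        (Sum.elim (fun i => V i z) (fun i : Fin n => lieB F (V i) z))} ∧
    U ⊆ closure {z | z ∈ U ∧ LinearIndependent ℝ
        (Sum.elim (fun i => V i z) (fun i : Fin n => lieB F (V i) z))} := by
  refine ⟨(continuousOn_pi.2 fun k => (contDiffOn_sumElim_lieB hU hVsmooth hF k).continuousOn)
    |>.isOpen_inter_preimage hU isOpen_setOfPred_linearIndependent, fun z hz => ?_⟩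
  refine mem_closure_iff.2 fun O hO hzO => ?_
  obtain ⟨w, ⟨hwO, hwU⟩, hw⟩ := exists_linearIndependent_sumElim_lieB hU hVsmooth hVli hF hreg
    (hO.inter hU) inter_subset_right ⟨z, hzO, hz⟩
  exact ⟨w, hwO, hwU, hw⟩

theorem stmt0 (m n : ℕ) (hm : 0 < m) (hn : 0 < n) (hmn : 2 * n ≤ m)
    (U : Set (Fin m → ℝ)) (hU : IsOpen U) (hUne : U.Nonempty)
    (V : Fin n → (Fin m → ℝ) → Fin m → ℝ)
    (hVsmooth : ∀ i, ContDiffOn ℝ (⊤ : ℕ∞) (V i) U)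
    (hVli : ∀ z ∈ U, LinearIndependent ℝ (fun i => V i z))
    (hVinv : ∀ z ∈ U, ∀ i j, lieB (V i) (V j) z ∈
      Submodule.span ℝ (Set.range fun k => V k z))
    (F : (Fin m → ℝ) → Fin m → ℝ) (hF : ContDiffOn ℝ (⊤ : ℕ∞) F U)
    (hreg : ∀ U' : Set (Fin m → ℝ), U' ⊆ U → IsOpen U' → U'.Nonempty →
      ∀ ξ : (Fin m → ℝ) → Fin n → ℝ, ContDiffOn ℝ (⊤ : ℕ∞) ξ U' →
        (∀ z ∈ U', lieB F (fun w => ∑ i, ξ w i • V i w) z ∈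
          Submodule.span ℝ (Set.range fun k => V k z)) →
        ∀ z ∈ U', ξ z = 0) :
    IsOpen {z | z ∈ U ∧ LinearIndependent ℝ
        (Sum.elim (fun i => V i z) (fun i : Fin n => lieB F (V i) z))} ∧
    U ⊆ closure {z | z ∈ U ∧ LinearIndependent ℝ
        (Sum.elim (fun i => V i z) (fun i : Fin n => lieB F (V i) z))} :=
  stmt0_general m n U hU V hVsmooth hVli F hF hreg
end

section
/- Let U ⊆ ℝ^m be a nonempty open set, let n ≤ p be positive integers, and let A : U → (ℝ^n →ₗ ℝ^p) be a smooth family of linear maps such that rank A(z) < n for every z ∈ U. Then there exist a nonempty open subset U' ⊆ U and a smooth map v : U' → ℝ^n which is nowhere zero on U' and satisfies A(z)(v(z)) = 0 for all z ∈ U'. -/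
/-!
Let `z₀` be a point of `U` where `rank A(z)` attains its maximum `r < n`. Some `r × r` minor
of `A(z₀)`, on rows `ρ` and columns `γ`, is nonzero, and it stays nonzero on a neighbourhood
`U'` of `z₀`. Pick a column `c ∉ γ`. For every row `k`, the `(r+1) × (r+1)` minor of `A(z)` on
rows `ρ ∪ {k}` and columns `γ ∪ {c}` vanishes because `rank A(z) ≤ r`; expanding it along row `k`
shows that the vector of signed `r × r` cofactors on rows `ρ` lies in the kernel of `A(z)`.
Its entries are polynomials in the entries of `A(z)`, hence smooth, and its entry at `c` is
`±` the minor that is nonzero on `U'`.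
-/

open Matrix Module Submodule Set

theorem exists_linearIndependent_comp_fin {K V ι : Type*} [DivisionRing K] [AddCommGroup V]
    [Module K V] [Finite ι] (v : ι → V) {r : ℕ} (hr : finrank K (span K (range v)) = r) :
    ∃ a : Fin r → ι, LinearIndependent K (v ∘ a) := by
  obtain ⟨κ, a, ha, hspan, hli⟩ := exists_linearIndependent' K v
  have := Finite.of_injective a ha
  have := Fintype.ofFinite κ
  have hcard : Fintype.card κ = r := by rw [← hr, ← hspan, finrank_span_eq_card hli]
  exact ⟨a ∘ (Fintype.equivFinOfCardEq hcard).symm, hli.comp _ (Equiv.injective _)⟩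

namespace Matrix

theorem exists_det_submatrix_ne_zero {m n K : Type*} [Fintype m] [Fintype n] [Field K]
    (M : Matrix m n K) : ∃ (ρ : Fin M.rank → m) (γ : Fin M.rank → n), (M.submatrix ρ γ).det ≠ 0 := by
  obtain ⟨γ, hγ⟩ := exists_linearIndependent_comp_fin M.col M.rank_eq_finrank_span_cols.symm
  have hcols : (M.submatrix id γ).rank = M.rank := by
    rw [rank_eq_finrank_span_cols]
    exact (finrank_span_eq_card hγ).trans (Fintype.card_fin _)
  obtain ⟨ρ, hρ⟩ := exists_linearIndependent_comp_fin (M.submatrix id γ).row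
    ((M.submatrix id γ).rank_eq_finrank_span_row.symm.trans hcols)
  exact ⟨ρ, γ, ((isUnit_iff_isUnit_det _).mp (linearIndependent_rows_iff_isUnit.mp hρ)).ne_zero⟩

theorem mulVec_sum_single {m n ι R : Type*} [Fintype n] [DecidableEq n] [Fintype ι]
    [CommSemiring R] (M : Matrix m n R) (γ : ι → n) (w : ι → R) :
    M *ᵥ ∑ j, Pi.single (γ j) (w j) = M.submatrix id γ *ᵥ w := by
  ext k
  simp only [mulVec, dotProduct, Finset.sum_apply, Finset.mul_sum, Pi.single_apply, mul_ite,
    mul_zero, submatrix_apply, id]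
  rw [Finset.sum_comm]
  simp

section Cofactor

variable {m R : Type*} [CommRing R] {r : ℕ}

def cofactorVec (N : Matrix m (Fin (r + 1)) R) (ρ : Fin r → m) : Fin (r + 1) → R :=
  fun j => (-1) ^ (r + (j : ℕ)) * (N.submatrix ρ j.succAbove).det

theorem cofactorVec_last_ne_zero [IsDomain R] {N : Matrix m (Fin (r + 1)) R} {ρ : Fin r → m}
    (h : (N.submatrix ρ Fin.castSucc).det ≠ 0) : N.cofactorVec ρ (Fin.last r) ≠ 0 := by
  simpa [cofactorVec, Fin.succAbove_last] using h

theorem mulVec_cofactorVec_eq_zero [IsDomain R] [Fintype m] {N : Matrix m (Fin (r + 1)) R}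
    (hN : N.rank ≤ r) (ρ : Fin r → m) : N *ᵥ N.cofactorVec ρ = 0 := by
  ext k
  set Q := N.submatrix (Fin.snoc ρ k) id
  have hQ : Q.det = 0 := by
    by_contra h
    have := (rank_of_det_ne_zero h).symm.trans_le ((rank_submatrix_le N _ _).trans hN)
    simp at this
  have hminor (j : Fin (r + 1)) :
      Q.submatrix (Fin.last r).succAbove j.succAbove = N.submatrix ρ j.succAbove := by
    ext a b
    simp [Q, Fin.succAbove_last]
  rw [det_succ_row Q (Fin.last r)] at hQ
  simp only [hminor] at hQ
  rw [Pi.zero_apply, ← hQ, mulVec, dotProduct]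
  refine Finset.sum_congr rfl fun j _ => ?_
  simp only [cofactorVec, Q, submatrix_apply, Fin.snoc_last, id, Fin.val_last]
  ring

end Cofactor

end Matrix

theorem Fin.sum_single_snoc_apply_of_notMem {n M : Type*} [DecidableEq n] [AddCommMonoid M]
    {r : ℕ} {γ : Fin r → n} {c : n} (hc : c ∉ range γ) (w : Fin (r + 1) → M) :
    (∑ j, (Pi.single ((Fin.snoc γ c : Fin (r + 1) → n) j) (w j) : n → M)) c = w (Fin.last r) := by
  have hγ (i : Fin r) : c ≠ γ i := fun h => hc ⟨i, h.symm⟩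
  simp [Fin.sum_univ_castSucc, Pi.single_apply, hγ]

section Smooth

variable {𝕜 E : Type*} [NontriviallyNormedField 𝕜] [NormedAddCommGroup E] [NormedSpace 𝕜 E]
  {s : Set E} {k : WithTop ℕ∞}

theorem ContDiffOn.matrix_det {ι : Type*} [Fintype ι] [DecidableEq ι] {N : E → Matrix ι ι 𝕜}
    (hN : ∀ i j, ContDiffOn 𝕜 k (fun z => N z i j) s) : ContDiffOn 𝕜 k (fun z => (N z).det) s := by
  simp_rw [det_apply']
  exact ContDiffOn.sum fun σ _ => contDiffOn_const.mul (contDiffOn_prod fun i _ => hN (σ i) i)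

theorem ContDiffOn.cofactorVec {m : Type*} {r : ℕ} {N : E → Matrix m (Fin (r + 1)) 𝕜}
    (hN : ∀ i j, ContDiffOn 𝕜 k (fun z => N z i j) s) (ρ : Fin r → m) :
    ContDiffOn 𝕜 k (fun z => (N z).cofactorVec ρ) s :=
  contDiffOn_pi.mpr fun _ => contDiffOn_const.mul (.matrix_det fun _ _ => hN _ _)

theorem ContDiffOn.toMatrix'_apply {m n : Type*} [Fintype m] [Fintype n] [DecidableEq n]
    {A : E → (n → 𝕜) →L[𝕜] (m → 𝕜)} (hA : ContDiffOn 𝕜 k A s) (a : m) (b : n) :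
    ContDiffOn 𝕜 k (fun z => LinearMap.toMatrix' (A z : (n → 𝕜) →ₗ[𝕜] (m → 𝕜)) a b) s := by
  simp only [LinearMap.toMatrix'_apply, ContinuousLinearMap.coe_coe]
  exact contDiffOn_pi.mp (hA.clm_apply contDiffOn_const) a

theorem exists_contDiffOn_mulVec_eq_zero_of_rank_lt {m n : Type*} [Fintype m] [Fintype n]
    [DecidableEq n] {U : Set E} (hU : IsOpen U) (hUne : U.Nonempty) {M : E → Matrix m n 𝕜}
    (hM : ∀ a b, ContDiffOn 𝕜 k (fun z => M z a b) U)
    (hrank : ∀ z ∈ U, (M z).rank < Fintype.card n) :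
    ∃ U' ⊆ U, IsOpen U' ∧ U'.Nonempty ∧ ∃ v : E → n → 𝕜, ContDiffOn 𝕜 k v U' ∧
      ∀ z ∈ U', v z ≠ 0 ∧ M z *ᵥ v z = 0 := by
  obtain ⟨_, ⟨z₀, hz₀, rfl⟩, hmax⟩ := BddAbove.exists_isGreatest_of_nonempty
    ⟨Fintype.card n, forall_mem_image.2 fun z hz => (hrank z hz).le⟩ (hUne.image fun z => (M z).rank)
  set r := (M z₀).rank
  obtain ⟨ρ, γ, hdet⟩ := (M z₀).exists_det_submatrix_ne_zero
  obtain ⟨c, hc⟩ : ∃ c, c ∉ range γ := by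
    by_contra! h
    simpa using (hrank z₀ hz₀).trans_le (Fintype.card_le_of_surjective γ h)
  set N := fun z => (M z).submatrix id (Fin.snoc γ c : Fin (r + 1) → n)
  have hNγ (z) : (N z).submatrix ρ Fin.castSucc = (M z).submatrix ρ γ := by
    ext a b
    simp [N]
  set U' := U ∩ {z | ((M z).submatrix ρ γ).det ≠ 0}
  have hcof : ContDiffOn 𝕜 k (fun z => (N z).cofactorVec ρ) U' :=
    .cofactorVec (fun a b => (hM _ _).mono inter_subset_left) ρ
  refine ⟨U', inter_subset_left, ?_, ⟨z₀, hz₀, hdet⟩,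
    fun z => ∑ j, Pi.single ((Fin.snoc γ c : Fin (r + 1) → n) j) ((N z).cofactorVec ρ j), ?_,
    fun z hz => ⟨?_, ?_⟩⟩
  · exact (ContDiffOn.matrix_det fun a b => hM _ _).continuousOn.isOpen_inter_preimage hU
      isOpen_compl_singleton
  · exact .sum fun j _ => (ContinuousLinearMap.single 𝕜 (fun _ : n => 𝕜) _).contDiff.comp_contDiffOn
      (contDiffOn_pi.mp hcof j)
  · intro h
    have hvc := congrFun h c
    dsimp only at hvc
    rw [Fin.sum_single_snoc_apply_of_notMem hc] at hvc
    exact cofactorVec_last_ne_zero (hNγ z ▸ hz.2) hvc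
  · rw [mulVec_sum_single]
    exact mulVec_cofactorVec_eq_zero ((rank_submatrix_le _ _ _).trans (hmax ⟨z, hz.1, rfl⟩)) ρ

end Smooth

theorem stmt1_general (m n p : ℕ)
    (U : Set (Fin m → ℝ)) (hU : IsOpen U) (hUne : U.Nonempty)
    (A : (Fin m → ℝ) → ((Fin n → ℝ) →L[ℝ] (Fin p → ℝ)))
    (hA : ContDiffOn ℝ (⊤ : ℕ∞) A U)
    (hrank : ∀ z ∈ U, Module.finrank ℝ (LinearMap.range (A z).toLinearMap) < n) :
    ∃ U' : Set (Fin m → ℝ), U' ⊆ U ∧ IsOpen U' ∧ U'.Nonempty ∧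
      ∃ v : (Fin m → ℝ) → Fin n → ℝ, ContDiffOn ℝ (⊤ : ℕ∞) v U' ∧
        ∀ z ∈ U', v z ≠ 0 ∧ A z (v z) = 0 := by
  set M := fun z => LinearMap.toMatrix' (A z : (Fin n → ℝ) →ₗ[ℝ] (Fin p → ℝ))
  have hMrank (z) : (M z).rank = finrank ℝ (LinearMap.range (A z).toLinearMap) := by
    rw [Matrix.rank, ← Matrix.toLin'_apply', Matrix.toLin'_toMatrix']
  obtain ⟨U', hU'U, hU'open, hU'ne, v, hv, hker⟩ := exists_contDiffOn_mulVec_eq_zero_of_rank_lt hU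
    hUne hA.toMatrix'_apply fun z hz => by simpa using (hMrank z).trans_lt (hrank z hz)
  refine ⟨U', hU'U, hU'open, hU'ne, v, hv, fun z hz => ⟨(hker z hz).1, ?_⟩⟩
  simpa [M, LinearMap.toMatrix'_mulVec] using (hker z hz).2

theorem stmt1 (m n p : ℕ) (hn : 0 < n) (hp : 0 < p) (hnp : n ≤ p)
    (U : Set (Fin m → ℝ)) (hU : IsOpen U) (hUne : U.Nonempty)
    (A : (Fin m → ℝ) → ((Fin n → ℝ) →L[ℝ] (Fin p → ℝ)))
    (hA : ContDiffOn ℝ (⊤ : ℕ∞) A U)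
    (hrank : ∀ z ∈ U, Module.finrank ℝ (LinearMap.range (A z).toLinearMap) < n) :
    ∃ U' : Set (Fin m → ℝ), U' ⊆ U ∧ IsOpen U' ∧ U'.Nonempty ∧
      ∃ v : (Fin m → ℝ) → Fin n → ℝ, ContDiffOn ℝ (⊤ : ℕ∞) v U' ∧
        ∀ z ∈ U', v z ≠ 0 ∧ A z (v z) = 0 :=
  stmt1_general m n p U hU hUne A hA hrank
end

section
/- Identify ℝ^m with ℝ^{m−n} × ℝ^n and let e_1, …, e_n be the constant vector fields given by the standard basis vectors of the second factor (the coordinate fields ∂/∂y^i). Let U ⊆ ℝ^m be open, let W_1, …, W_n be smooth vector fields on U such that the 2n vectors e_1(z), …, e_n(z), W_1(z), …, W_n(z) are linearly independent at every z ∈ U, and let α^k_{ij}, β^k_{ij} : U → ℝ be smooth functions satisfying [e_i, W_j] = α^k_{ij} e_k + β^k_{ij} W_k on U for all i, j. Then for all i, j, k, l the identity ∂β^l_{jk}/∂y^i − ∂β^l_{ik}/∂y^j + β^l_{im} β^m_{jk} − β^l_{jm} β^m_{ik} = 0 holds on U. -/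
/-- The constant vector field `∂/∂y^i` on `ℝ^{m−n} × ℝ^n` (here `p = m − n`). -/
def eVec (p n : ℕ) (i : Fin n) : (Fin p → ℝ) × (Fin n → ℝ) := (0, Pi.single i 1)

/-!
Because `e_i` is constant, `[e_i, W_k]` is the directional derivative `∂_i W_k`, so the structure
relations expand `∂_i W_k` in the frame `(e, W)`. Differentiating along `e_j` and expanding the
resulting `∂_j W_m` once more expands `∂_j ∂_i W_k` in the frame, with `W_l`-coefficient
`∂_j β^l_{ik} + β^m_{ik} β^l_{jm}`. Second derivatives are symmetric and the frame is linearly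
independent, so this coefficient is symmetric in `i, j`, which is the identity.
-/

open Filter Topology

section

variable {E F : Type*} [NormedAddCommGroup E] [NormedSpace ℝ E]
  [NormedAddCommGroup F] [NormedSpace ℝ F]

theorem lieB_const_left (v : E) (Y : E → E) (z : E) :
    lieB (fun _ => v) Y z = fderiv ℝ Y z v := by
  simp [lieB]

theorem fderiv_fderiv_apply_comm {f : E → F} {z : E} (hf : ContDiffAt ℝ 2 f z) (v w : E) :
    fderiv ℝ (fun y => fderiv ℝ f y v) z w = fderiv ℝ (fun y => fderiv ℝ f y w) z v := by
  have hd : DifferentiableAt ℝ (fderiv ℝ f) z :=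
    (hf.fderiv_right (m := 1) (by norm_num)).differentiableAt one_ne_zero
  rw [fderiv_clm_apply hd (differentiableAt_const v),
    fderiv_clm_apply hd (differentiableAt_const w)]
  simpa using (hf.isSymmSndFDerivAt (by simp)) w v

theorem LinearIndependent.coeff_inr_eq_of_sum_eq {ι κ : Type*} [Fintype ι] [Fintype κ]
    {e : ι → E} {w : κ → E} (h : LinearIndependent ℝ (Sum.elim e w))
    {a a' : ι → ℝ} {b b' : κ → ℝ}
    (hab : ∑ c, a c • e c + ∑ c, b c • w c = ∑ c, a' c • e c + ∑ c, b' c • w c) (c : κ) :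
    b c = b' c := by
  simpa using Fintype.linearIndependent_iffₛ.1 h (Sum.elim a b) (Sum.elim a' b')
    (by simpa [Fintype.sum_sum_type] using hab) (Sum.inr c)

theorem fderiv_sum_smul_add_sum_smul {ι κ : Type*} [Fintype ι] [Fintype κ]
    {a : ι → E → ℝ} {b : κ → E → ℝ} {e : ι → F} {W : κ → E → F} {z : E}
    (ha : ∀ c, DifferentiableAt ℝ (a c) z) (hb : ∀ c, DifferentiableAt ℝ (b c) z)
    (hW : ∀ c, DifferentiableAt ℝ (W c) z) (v : E) :
    fderiv ℝ (fun y => ∑ c, a c y • e c + ∑ c, b c y • W c y) z v =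
      ∑ c, fderiv ℝ (a c) z v • e c +
        ∑ c, (fderiv ℝ (b c) z v • W c z + b c z • fderiv ℝ (W c) z v) := by
  have hsum_e := HasFDerivAt.fun_sum (u := Finset.univ) fun c _ =>
    (ha c).hasFDerivAt.smul_const (e c)
  have hsum_W := HasFDerivAt.fun_sum (u := Finset.univ) fun c _ =>
    (hb c).hasFDerivAt.fun_smul (hW c).hasFDerivAt
  rw [(hsum_e.fun_add hsum_W).fderiv]
  simp [add_comm]

section FrameRelation

variable {ι κ : Type*} [Fintype ι] [Fintype κ] {e : ι → E} {W : κ → E → E}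
  {α : ι → κ → ι → E → ℝ} {β : ι → κ → κ → E → ℝ} {z : E}

theorem fderiv_fderiv_apply_eq_of_frame_relation
    (hW : ∀ c, DifferentiableAt ℝ (W c) z) (hα : ∀ a k c, DifferentiableAt ℝ (α a k c) z)
    (hβ : ∀ a k c, DifferentiableAt ℝ (β a k c) z)
    (hrel : ∀ a k, (fun y => fderiv ℝ (W k) y (e a)) =ᶠ[𝓝 z]
      fun y => ∑ c, α a k c y • e c + ∑ c, β a k c y • W c y)
    (a b : ι) (k : κ) :
    fderiv ℝ (fun y => fderiv ℝ (W k) y (e a)) z (e b) =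
      ∑ c, (fderiv ℝ (α a k c) z (e b) + ∑ m, β a k m z * α b m c z) • e c +
        ∑ c, (fderiv ℝ (β a k c) z (e b) + ∑ m, β a k m z * β b m c z) • W c z := by
  rw [(hrel a k).fderiv_eq, fderiv_sum_smul_add_sum_smul (hα a k) (hβ a k) hW]
  simp only [fun c => (hrel b c).self_of_nhds, smul_add, Finset.smul_sum, smul_smul, add_smul,
    Finset.sum_smul, Finset.sum_add_distrib]
  rw [Finset.sum_comm (s := Finset.univ (α := κ)) (t := Finset.univ (α := ι)),
    Finset.sum_comm (s := Finset.univ (α := κ)) (t := Finset.univ (α := κ))]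
  abel

theorem zero_curvature_of_frame_relation
    (hW : ∀ c, ContDiffAt ℝ 2 (W c) z) (hα : ∀ a k c, DifferentiableAt ℝ (α a k c) z)
    (hβ : ∀ a k c, DifferentiableAt ℝ (β a k c) z)
    (hrel : ∀ a k, (fun y => fderiv ℝ (W k) y (e a)) =ᶠ[𝓝 z]
      fun y => ∑ c, α a k c y • e c + ∑ c, β a k c y • W c y)
    (hli : LinearIndependent ℝ (Sum.elim e fun c => W c z)) (i j : ι) (k l : κ) :
    fderiv ℝ (β j k l) z (e i) - fderiv ℝ (β i k l) z (e j) +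
      ∑ m, (β i m l z * β j k m z - β j m l z * β i k m z) = 0 := by
  have hW1 : ∀ c, DifferentiableAt ℝ (W c) z := fun c => (hW c).differentiableAt two_ne_zero
  have hcoeff := hli.coeff_inr_eq_of_sum_eq
    ((fderiv_fderiv_apply_eq_of_frame_relation hW1 hα hβ hrel i j k).symm.trans <|
      (fderiv_fderiv_apply_comm (hW k) (e i) (e j)).trans
        (fderiv_fderiv_apply_eq_of_frame_relation hW1 hα hβ hrel j i k)) l
  simp only [Finset.sum_sub_distrib, mul_comm (β i _ l z), mul_comm (β j _ l z)]
  linarith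

end FrameRelation

end

theorem stmt4 (p n : ℕ)
    (U : Set ((Fin p → ℝ) × (Fin n → ℝ))) (hU : IsOpen U)
    (W : Fin n → ((Fin p → ℝ) × (Fin n → ℝ)) → (Fin p → ℝ) × (Fin n → ℝ))
    (hWsm : ∀ i, ContDiffOn ℝ (⊤ : ℕ∞) (W i) U)
    (hli : ∀ z ∈ U, LinearIndependent ℝ
      (Sum.elim (fun i : Fin n => eVec p n i) (fun i : Fin n => W i z)))
    -- `α i j k` stands for `α^k_{ij}`, and `β i j k` for `β^k_{ij}`
    (α β : Fin n → Fin n → Fin n → ((Fin p → ℝ) × (Fin n → ℝ)) → ℝ)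
    (hα : ∀ i j k, ContDiffOn ℝ (⊤ : ℕ∞) (α i j k) U)
    (hβ : ∀ i j k, ContDiffOn ℝ (⊤ : ℕ∞) (β i j k) U)
    (hrel : ∀ i j, ∀ z ∈ U,
      lieB (fun _ => eVec p n i) (W j) z =
        (∑ k, α i j k z • eVec p n k) + ∑ k, β i j k z • W k z) :
    ∀ i j k l, ∀ z ∈ U,
      fderiv ℝ (β j k l) z (eVec p n i) - fderiv ℝ (β i k l) z (eVec p n j) +
        ∑ m', (β i m' l z * β j k m' z - β j m' l z * β i k m' z) = 0 := by
  intro i j k l z hz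
  have hzU : U ∈ 𝓝 z := hU.mem_nhds hz
  refine zero_curvature_of_frame_relation (fun c => ((hWsm c).contDiffAt hzU).of_le (by norm_cast))
    (fun a k c => ((hα a k c).contDiffAt hzU).differentiableAt (by simp))
    (fun a k c => ((hβ a k c).contDiffAt hzU).differentiableAt (by simp))
    (fun a k => ?_) (hli z hz) i j k l
  filter_upwards [hzU] with y hy
  rw [← lieB_const_left, hrel a k y hy]
end

section
/- Let U ⊆ ℝ^m be open, let V_1, …, V_n and F be smooth vector fields on U, set W_i := [F, V_i], and assume: (a) the 2n vectors V_1(z), …, V_n(z), W_1(z), …, W_n(z) are linearly independent at every z ∈ U; (b) there are smooth functions c^k_{ij} : U → ℝ with [V_i, V_j] = c^k_{ij} V_k on U; (c) [V_i, W_j](z) ∈ 𝒲_z := span{V_1(z), …, V_n(z), W_1(z), …, W_n(z)} for all z ∈ U and all i, j. For z ∈ U let S_z : 𝒲_z → ℝ^m be the unique linear map with S_z(V_i(z)) = 0 and S_z(W_i(z)) = −V_i(z) for all i. Then for all z ∈ U and all i, j: [V_i, V_j](z) + S_z([V_i, W_j](z)) − S_z([V_j, W_i](z)) = 0. -/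
open Filter Topology

lemma lieB_eq_lieBracket {E : Type*} [NormedAddCommGroup E] [NormedSpace ℝ E] (X Y : E → E) :
    lieB X Y = VectorField.lieBracket ℝ X Y :=
  rfl

namespace VectorField

variable {𝕜 : Type*} [NontriviallyNormedField 𝕜] {E : Type*} [NormedAddCommGroup E]
  [NormedSpace 𝕜 E]

lemma lieBracket_lieBracket_sub_lieBracket_lieBracket {n : WithTop ℕ∞}
    (hn : minSmoothness 𝕜 2 ≤ n) {U V W : E → E} {x : E} (hU : ContDiffAt 𝕜 n U x)
    (hV : ContDiffAt 𝕜 n V x) (hW : ContDiffAt 𝕜 n W x) :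
    lieBracket 𝕜 V (lieBracket 𝕜 U W) x - lieBracket 𝕜 W (lieBracket 𝕜 U V) x =
      lieBracket 𝕜 U (lieBracket 𝕜 V W) x := by
  rw [leibniz_identity_lieBracket hn hU hV hW, lieBracket_swap (V := lieBracket 𝕜 U V)]
  abel

lemma lieBracket_finset_sum_right {ι : Type*} (s : Finset ι) {V : E → E} {W : ι → E → E}
    {x : E} (hW : ∀ k ∈ s, DifferentiableAt 𝕜 (W k) x) :
    lieBracket 𝕜 V (fun y ↦ ∑ k ∈ s, W k y) x = ∑ k ∈ s, lieBracket 𝕜 V (W k) x := by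
  classical
  induction s using Finset.induction_on with
  | empty => simp [lieBracket_eq]
  | insert a s ha ih =>
    simp only [Finset.sum_insert ha]
    rw [Finset.forall_mem_insert] at hW
    have hsum : DifferentiableAt 𝕜 (fun y ↦ ∑ k ∈ s, W k y) x :=
      DifferentiableAt.fun_sum fun k hk ↦ hW.2 k hk
    rw [← ih hW.2]
    exact lieBracket_add_right (W := W a) hW.1 hsum

lemma lieBracket_sum_smul_right {ι : Type*} [Fintype ι] {V : E → E} {f : ι → E → 𝕜}
    {W : ι → E → E} {x : E} (hf : ∀ k, DifferentiableAt 𝕜 (f k) x)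
    (hW : ∀ k, DifferentiableAt 𝕜 (W k) x) :
    lieBracket 𝕜 V (fun y ↦ ∑ k, f k y • W k y) x =
      ∑ k, fderiv 𝕜 (f k) x (V x) • W k x + ∑ k, f k x • lieBracket 𝕜 V (W k) x := by
  rw [lieBracket_finset_sum_right (W := fun k y ↦ f k y • W k y) _
    fun k _ ↦ (hf k).smul (hW k), ← Finset.sum_add_distrib]
  exact Finset.sum_congr rfl fun k _ ↦ lieBracket_smul_right (hf k) (hW k)

end VectorField

section Span

variable {R M N ι : Type*} [CommRing R] [AddCommGroup M] [Module R M] [AddCommGroup N]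
  [Module R N] [Fintype ι]

lemma LinearMap.apply_eq_sum_smul_of_coe_eq {v w : ι → M} {u : ι → N}
    (S : Submodule.span R (Set.range (Sum.elim v w)) →ₗ[R] N)
    (hSv : ∀ k, S ⟨v k, Submodule.subset_span ⟨Sum.inl k, rfl⟩⟩ = 0)
    (hSw : ∀ k, S ⟨w k, Submodule.subset_span ⟨Sum.inr k, rfl⟩⟩ = u k)
    {a b : ι → R} {x : Submodule.span R (Set.range (Sum.elim v w))}
    (hx : (x : M) = ∑ k, a k • v k + ∑ k, b k • w k) :
    S x = ∑ k, b k • u k := by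
  have hx' : x = ∑ k, a k • ⟨v k, Submodule.subset_span ⟨Sum.inl k, rfl⟩⟩
      + ∑ k, b k • ⟨w k, Submodule.subset_span ⟨Sum.inr k, rfl⟩⟩ := by
    ext
    simp [hx]
  rw [hx', map_add, map_sum, map_sum]
  simp only [map_smul, hSv, hSw, smul_zero, Finset.sum_const_zero, zero_add]

end Span

theorem stmt12_general (m n : ℕ) (U : Set (Fin m → ℝ)) (hU : IsOpen U)
    (V : Fin n → (Fin m → ℝ) → Fin m → ℝ) (F : (Fin m → ℝ) → Fin m → ℝ)
    (hVsm : ∀ i, ContDiffOn ℝ (⊤ : ℕ∞) (V i) U)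
    (hF : ContDiffOn ℝ (⊤ : ℕ∞) F U)
    -- `c i j k` stands for `c^k_{ij}`
    (c : Fin n → Fin n → Fin n → (Fin m → ℝ) → ℝ)
    (hc : ∀ i j k, ContDiffOn ℝ (⊤ : ℕ∞) (c i j k) U)
    (hVV : ∀ i j, ∀ z ∈ U, lieB (V i) (V j) z = ∑ k, c i j k z • V k z)
    (hVW : ∀ i j, ∀ z ∈ U, lieB (V i) (lieB F (V j)) z ∈
      Submodule.span ℝ (Set.range (Sum.elim (fun k => V k z)
        (fun k : Fin n => lieB F (V k) z)))) :
    ∀ z, ∀ hz : z ∈ U, ∀ i j,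
    ∀ S : ↥(Submodule.span ℝ (Set.range (Sum.elim (fun k => V k z)
          (fun k : Fin n => lieB F (V k) z)))) →ₗ[ℝ] (Fin m → ℝ),
      (∀ k, S ⟨V k z, Submodule.subset_span ⟨Sum.inl k, rfl⟩⟩ = 0) →
      (∀ k, S ⟨lieB F (V k) z, Submodule.subset_span ⟨Sum.inr k, rfl⟩⟩ = -(V k z)) →
      lieB (V i) (V j) z
        + S ⟨lieB (V i) (lieB F (V j)) z, hVW i j z hz⟩
        - S ⟨lieB (V j) (lieB F (V i)) z, hVW j i z hz⟩ = 0 := by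
  intro z hz i j S hSV hSW
  have hsmooth : minSmoothness ℝ 2 ≤ ((⊤ : ℕ∞) : WithTop ℕ∞) := by
    rw [minSmoothness_of_isRCLikeNormedField]
    norm_cast
  have hVz : ∀ k, ContDiffAt ℝ (⊤ : ℕ∞) (V k) z := fun k ↦ (hVsm k).contDiffAt (hU.mem_nhds hz)
  have hFz : ContDiffAt ℝ (⊤ : ℕ∞) F z := hF.contDiffAt (hU.mem_nhds hz)
  have hcz : ∀ k, DifferentiableAt ℝ (c i j k) z := fun k ↦
    ((hc i j k).contDiffAt (hU.mem_nhds hz)).differentiableAt (by simp)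
  have jacobi : lieB (V i) (lieB F (V j)) z - lieB (V j) (lieB F (V i)) z
      = lieB F (lieB (V i) (V j)) z := by
    simpa only [lieB_eq_lieBracket] using
      VectorField.lieBracket_lieBracket_sub_lieBracket_lieBracket hsmooth hFz (hVz i) (hVz j)
  have leibniz : lieB F (lieB (V i) (V j)) z
      = ∑ k, fderiv ℝ (c i j k) z (F z) • V k z + ∑ k, c i j k z • lieB F (V k) z := by
    have hloc : lieB (V i) (V j) =ᶠ[𝓝 z] fun y ↦ ∑ k, c i j k y • V k y :=
      eventually_of_mem (hU.mem_nhds hz) fun y hy ↦ hVV i j y hy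
    simp only [lieB_eq_lieBracket] at hloc ⊢
    rw [← VectorField.lieBracket_sum_smul_right hcz
      fun k ↦ (hVz k).differentiableAt (by simp)]
    exact EventuallyEq.rfl.lieBracket_vectorField_eq hloc
  have hS : S ⟨lieB (V i) (lieB F (V j)) z, hVW i j z hz⟩
      - S ⟨lieB (V j) (lieB F (V i)) z, hVW j i z hz⟩ = -lieB (V i) (V j) z := by
    rw [← map_sub, LinearMap.apply_eq_sum_smul_of_coe_eq S hSV hSW
      (by rw [Submodule.coe_sub]; exact jacobi.trans leibniz), hVV i j z hz]
    simp only [smul_neg, Finset.sum_neg_distrib]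
  rw [add_sub_assoc, hS, add_neg_cancel]

theorem stmt12 (m n : ℕ) (U : Set (Fin m → ℝ)) (hU : IsOpen U)
    (V : Fin n → (Fin m → ℝ) → Fin m → ℝ) (F : (Fin m → ℝ) → Fin m → ℝ)
    (hVsm : ∀ i, ContDiffOn ℝ (⊤ : ℕ∞) (V i) U)
    (hF : ContDiffOn ℝ (⊤ : ℕ∞) F U)
    (hli : ∀ z ∈ U, LinearIndependent ℝ
      (Sum.elim (fun i => V i z) (fun i : Fin n => lieB F (V i) z)))
    -- `c i j k` stands for `c^k_{ij}`
    (c : Fin n → Fin n → Fin n → (Fin m → ℝ) → ℝ)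
    (hc : ∀ i j k, ContDiffOn ℝ (⊤ : ℕ∞) (c i j k) U)
    (hVV : ∀ i j, ∀ z ∈ U, lieB (V i) (V j) z = ∑ k, c i j k z • V k z)
    (hVW : ∀ i j, ∀ z ∈ U, lieB (V i) (lieB F (V j)) z ∈
      Submodule.span ℝ (Set.range (Sum.elim (fun k => V k z)
        (fun k : Fin n => lieB F (V k) z)))) :
    ∀ z, ∀ hz : z ∈ U, ∀ i j,
    ∀ S : ↥(Submodule.span ℝ (Set.range (Sum.elim (fun k => V k z)
          (fun k : Fin n => lieB F (V k) z)))) →ₗ[ℝ] (Fin m → ℝ),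
      (∀ k, S ⟨V k z, Submodule.subset_span ⟨Sum.inl k, rfl⟩⟩ = 0) →
      (∀ k, S ⟨lieB F (V k) z, Submodule.subset_span ⟨Sum.inr k, rfl⟩⟩ = -(V k z)) →
      lieB (V i) (V j) z
        + S ⟨lieB (V i) (lieB F (V j)) z, hVW i j z hz⟩
        - S ⟨lieB (V j) (lieB F (V i)) z, hVW j i z hz⟩ = 0 :=
  stmt12_general m n U hU V F hVsm hF c hc hVV hVW
end
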